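/- arXiv:math/0601770 — 2 statements merged into one kernel-verified Lean document; each statement's English description precedes it below -/
import Mathlib

section
/- Let Δ be the root system of a complex simple Lie algebra with base Π. Suppose α = α₁ + ⋯ + α_k is a positive root written as a sum of simple roots such that every partial sum α₁ + ⋯ + α_l (1 ≤ l ≤ k) is a root, and suppose β is a positive root such that β − α is a root. Then there exists an index i with 1 ≤ i ≤ k such that β − α_i is a root or β = α_i. -/
open scoped InnerProductSpace

variable {V : Type*} [NormedAddCommGroup V] [InnerProductSpace ℝ V]

/-- A (reduced, crystallographic) root system in a real inner product space. -/
structure IsRootSystem (Δ : Set V) : Prop where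
  finite : Δ.Finite
  nonzero : (0 : V) ∉ Δ
  span_top : Submodule.span ℝ Δ = ⊤
  reflect_mem : ∀ α ∈ Δ, ∀ β ∈ Δ, β - (2 * ⟪β, α⟫_ℝ / ⟪α, α⟫_ℝ) • α ∈ Δ
  crystallographic : ∀ α ∈ Δ, ∀ β ∈ Δ, ∃ n : ℤ, 2 * ⟪β, α⟫_ℝ / ⟪α, α⟫_ℝ = (n : ℝ)
  reduced : ∀ α ∈ Δ, ∀ t : ℝ, t • α ∈ Δ → t = 1 ∨ t = -1

/-- `Pi` is a base of simple roots for the root system `Δ`. -/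
structure IsBase (Δ : Set V) (Pi : Finset V) : Prop where
  subset : ↑Pi ⊆ Δ
  indep : LinearIndependent ℝ (fun γ : {x // x ∈ Pi} => (γ : V))
  decomp : ∀ α ∈ Δ, (∃ c : V → ℕ, α = ∑ γ ∈ Pi, (c γ : ℝ) • γ) ∨
      (∃ c : V → ℕ, α = -∑ γ ∈ Pi, (c γ : ℝ) • γ)

/-- `α` is a positive root with respect to the base `Pi`. -/
def IsPos (Δ : Set V) (Pi : Finset V) (α : V) : Prop :=
  α ∈ Δ ∧ ∃ c : V → ℕ, α = ∑ γ ∈ Pi, (c γ : ℝ) • γ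

/-- The dominance order associated with the base `Pi`. -/
def DomLe (Pi : Finset V) (ω₁ ω₂ : V) : Prop :=
  ∃ c : V → ℕ, ω₂ = ω₁ + ∑ γ ∈ Pi, (c γ : ℝ) • γ

/-- `θ` is the highest root of `Δ` with respect to the base `Pi`. -/
def IsHighest (Δ : Set V) (Pi : Finset V) (θ : V) : Prop :=
  θ ∈ Δ ∧ ∀ α ∈ Δ, DomLe Pi α θ

/-- The root system `Δ` is irreducible. -/
def IsIrred (Δ : Set V) : Prop :=
  ∀ Δ₁ Δ₂ : Set V, Δ = Δ₁ ∪ Δ₂ → (∀ a ∈ Δ₁, ∀ b ∈ Δ₂, ⟪a, b⟫_ℝ = 0) →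
    Δ₁ = ∅ ∨ Δ₂ = ∅

/-!
Two roots with negative inner product sum to a root or to zero: one of their two Cartan integers
is `-1`, since if both were `≤ -2` then `‖x + y‖² ≤ 0`. Hence, for roots `a`, `b`, `a + b`, `ν`
with `ν + a + b` a root, `ν + a` or `ν + b` is a root or zero: otherwise `⟪ν, a⟫, ⟪ν, b⟫ ≥ 0`, so
`⟪ν + a + b, a + b⟫ > 0` and subtracting `a` or `b` from `ν + a + b` gives a root.
Apply this with `ν = β − α`, `a = α₁ + ⋯ + α_{k-1}`, `b = α_k`: either `k` is the required index,
or `β − a` is a root and we induct on `k`, or `β = a` and then `β − α_{k-1}` is a partial sum.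
-/

open Finset

namespace IsRootSystem

variable {Δ : Set V}

theorem ne_zero (hΔ : IsRootSystem Δ) {x : V} (hx : x ∈ Δ) : x ≠ 0 :=
  fun h => hΔ.nonzero (h ▸ hx)

theorem inner_self_pos (hΔ : IsRootSystem Δ) {x : V} (hx : x ∈ Δ) : 0 < ⟪x, x⟫_ℝ :=
  real_inner_self_pos.mpr (hΔ.ne_zero hx)

theorem neg_mem (hΔ : IsRootSystem Δ) {x : V} (hx : x ∈ Δ) : -x ∈ Δ := by
  have h := hΔ.reflect_mem x hx x hx
  rwa [mul_div_assoc, div_self (hΔ.inner_self_pos hx).ne', mul_one, two_smul,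
    sub_add_cancel_left] at h

theorem add_mem_or_inner_le_neg_inner_self (hΔ : IsRootSystem Δ) {x y : V} (hx : x ∈ Δ)
    (hy : y ∈ Δ) (hxy : ⟪x, y⟫_ℝ < 0) : x + y ∈ Δ ∨ ⟪x, y⟫_ℝ ≤ -⟪y, y⟫_ℝ := by
  have hyy := hΔ.inner_self_pos hy
  obtain ⟨n, hn⟩ := hΔ.crystallographic y hy x hx
  have hn_neg : (n : ℝ) < 0 := hn ▸ div_neg_of_neg_of_pos (by linarith) hyy
  have hn_eq : 2 * ⟪x, y⟫_ℝ = n * ⟪y, y⟫_ℝ := by rw [← hn, div_mul_cancel₀ _ hyy.ne']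
  have hn_lt : n < 0 := by exact_mod_cast hn_neg
  rcases (by omega : n = -1 ∨ n ≤ -2) with rfl | hn_le
  · left
    have h := hΔ.reflect_mem y hy x hx
    rwa [hn, Int.cast_neg, Int.cast_one, neg_one_smul, sub_neg_eq_add] at h
  · right
    have : (n : ℝ) ≤ -2 := by exact_mod_cast hn_le
    nlinarith

theorem add_mem_of_inner_neg (hΔ : IsRootSystem Δ) {x y : V} (hx : x ∈ Δ) (hy : y ∈ Δ)
    (hxy : ⟪x, y⟫_ℝ < 0) (hne : x + y ≠ 0) : x + y ∈ Δ := by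
  rcases hΔ.add_mem_or_inner_le_neg_inner_self hx hy hxy with h | hy_le
  · exact h
  rcases hΔ.add_mem_or_inner_le_neg_inner_self hy hx (by rwa [real_inner_comm]) with h | hx_le
  · rwa [add_comm]
  rw [real_inner_comm] at hx_le
  have : ⟪x + y, x + y⟫_ℝ ≤ 0 := by
    rw [inner_add_add_self, real_inner_comm x y]
    linarith
  exact absurd (real_inner_self_nonpos.mp this) hne

theorem sub_mem_of_inner_pos (hΔ : IsRootSystem Δ) {x y : V} (hx : x ∈ Δ) (hy : y ∈ Δ)
    (hxy : 0 < ⟪x, y⟫_ℝ) (hne : x ≠ y) : x - y ∈ Δ := by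
  rw [sub_eq_add_neg]
  exact hΔ.add_mem_of_inner_neg hx (hΔ.neg_mem hy) (by rw [inner_neg_right]; linarith)
    (fun h => hne (add_neg_eq_zero.mp h))

theorem sub_mem_or_sub_mem_of_sub_add_mem (hΔ : IsRootSystem Δ) {β a b : V} (hβ : β ∈ Δ)
    (ha : a ∈ Δ) (hb : b ∈ Δ) (hab : a + b ∈ Δ) (hν : β - (a + b) ∈ Δ) :
    (β - a ∈ Δ ∨ β = a) ∨ (β - b ∈ Δ ∨ β = b) := by
  obtain ⟨ν, rfl⟩ : ∃ ν, β = ν + (a + b) := ⟨β - (a + b), by abel⟩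
  rw [add_sub_cancel_right] at hν
  have sub_a : ν + (a + b) - a = ν + b := by abel
  have sub_b : ν + (a + b) - b = ν + a := by abel
  rw [sub_a, sub_b, ← sub_eq_zero (b := a), ← sub_eq_zero (b := b), sub_a, sub_b]
  by_contra! ⟨⟨hνb, hνb0⟩, hνa, hνa0⟩
  have hνa_nonneg : 0 ≤ ⟪ν, a⟫_ℝ := by
    by_contra! h
    exact hνa (hΔ.add_mem_of_inner_neg hν ha h hνa0)
  have hνb_nonneg : 0 ≤ ⟪ν, b⟫_ℝ := by
    by_contra! h
    exact hνb (hΔ.add_mem_of_inner_neg hν hb h hνb0)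
  have hpos : 0 < ⟪ν + (a + b), a⟫_ℝ + ⟪ν + (a + b), b⟫_ℝ := by
    have := hΔ.inner_self_pos hab
    rw [← inner_add_right, inner_add_left, inner_add_right]
    linarith
  rcases lt_or_ge 0 ⟪ν + (a + b), a⟫_ℝ with h | h
  · have := hΔ.sub_mem_of_inner_pos hβ ha h (by rwa [← sub_ne_zero, sub_a])
    exact hνb (sub_a ▸ this)
  · have := hΔ.sub_mem_of_inner_pos hβ hb (by linarith) (by rwa [← sub_ne_zero, sub_b])
    exact hνa (sub_b ▸ this)

theorem exists_sub_mem_of_sub_sum_mem (hΔ : IsRootSystem Δ) {k : ℕ} (hk : 1 ≤ k)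
    {αs : ℕ → V} (hαs : ∀ i < k, αs i ∈ Δ)
    (hpartial : ∀ l, 1 ≤ l → l ≤ k → (∑ i ∈ range l, αs i) ∈ Δ)
    {β : V} (hβ : β ∈ Δ) (hβα : β - ∑ i ∈ range k, αs i ∈ Δ) :
    ∃ i < k, β - αs i ∈ Δ ∨ β = αs i := by
  induction k, hk using Nat.le_induction with
  | base => exact ⟨0, one_pos, Or.inl (by simpa using hβα)⟩
  | succ k hk ih =>
    rw [sum_range_succ] at hβα
    have hsum : (∑ i ∈ range k, αs i) + αs k ∈ Δ := by
      simpa [sum_range_succ] using hpartial (k + 1) (by omega) le_rfl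
    rcases hΔ.sub_mem_or_sub_mem_of_sub_add_mem hβ (hpartial k hk k.le_succ)
      (hαs k (by omega)) hsum hβα with hβa | hβb
    · rcases hβa with hβa | hβa
      · obtain ⟨i, hi, h⟩ := ih (fun i hi => hαs i (by omega))
          (fun l hl hlk => hpartial l hl (by omega)) hβa
        exact ⟨i, by omega, h⟩
      · obtain ⟨n, rfl⟩ := Nat.exists_eq_add_of_le' hk
        rw [sum_range_succ] at hβa
        refine ⟨n, by omega, ?_⟩
        rcases Nat.eq_zero_or_pos n with rfl | hn
        · simp [hβa]
        · exact Or.inl (by rw [hβa, add_sub_cancel_right]; exact hpartial n hn (by omega))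
    · exact ⟨k, by omega, hβb⟩

end IsRootSystem

theorem exists_extremal_in_support_general {V : Type*} [NormedAddCommGroup V]
    [InnerProductSpace ℝ V] (Δ : Set V) (Pi : Finset V)
    (hΔ : IsRootSystem Δ) (hB : IsBase Δ Pi)
    (k : ℕ) (hk : 1 ≤ k) (αs : ℕ → V) (hαs : ∀ i < k, αs i ∈ Pi)
    (α : V) (hα : α = ∑ i ∈ Finset.range k, αs i)
    (hpartial : ∀ l, 1 ≤ l → l ≤ k → (∑ i ∈ Finset.range l, αs i) ∈ Δ)
    (β : V) (hβ : IsPos Δ Pi β) (hβα : β - α ∈ Δ) :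
    ∃ i < k, β - αs i ∈ Δ ∨ β = αs i := by
  subst hα
  exact hΔ.exists_sub_mem_of_sub_sum_mem hk (fun i hi => hB.subset (hαs i hi)) hpartial hβ.1 hβα

/-- If a positive root `α = α₁ + ⋯ + α_k` is written as a sum of simple roots with all
partial sums roots, and `β` is a positive root with `β − α ∈ Δ`, then some `α_i`
satisfies `β − α_i ∈ Δ` or `β = α_i`. -/
theorem exists_extremal_in_support {V : Type*} [NormedAddCommGroup V]
    [InnerProductSpace ℝ V] (Δ : Set V) (Pi : Finset V)
    (hΔ : IsRootSystem Δ) (hB : IsBase Δ Pi)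
    (k : ℕ) (hk : 1 ≤ k) (αs : ℕ → V) (hαs : ∀ i < k, αs i ∈ Pi)
    (α : V) (hα : α = ∑ i ∈ Finset.range k, αs i)
    (hpartial : ∀ l, 1 ≤ l → l ≤ k → (∑ i ∈ Finset.range l, αs i) ∈ Δ)
    (hαpos : IsPos Δ Pi α)
    (β : V) (hβ : IsPos Δ Pi β) (hβα : β - α ∈ Δ) :
    ∃ i < k, β - αs i ∈ Δ ∨ β = αs i :=
  exists_extremal_in_support_general Δ Pi hΔ hB k hk αs hαs α hα hpartial β hβ hβα
end

section
/- Let g be a complex simple Lie algebra and let P ⊆ Δ₊ be a nonempty set of positive roots satisfying: (i) for all α, β ∈ Δ₊ with α + β ∈ Δ₊, if α ∈ P or β ∈ P then α + β ∈ P; (ii) for all α, β ∈ Δ₊ with α + β ∈ P, both α ∈ P and β ∈ P. Then P = Δ₊. -/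
/-!
A saturated set `P` is closed under passing from a member `u` to any positive root `v` with
`⟪u, v⟫ ≠ 0`. If `⟪u, v⟫ < 0`, then `u + v` is a positive root, so `u + v ∈ P` by (i) and
`v ∈ P` by (ii). If `⟪u, v⟫ > 0` and `u ≠ v`, then `u - v` is a root; when it is positive,
`u = v + (u - v)` gives `v ∈ P` by (ii), and otherwise `v = u + (v - u)` gives `v ∈ P` by (i).
Irreducibility makes the positive roots connected under non-orthogonality, so `P = Δ₊`.
-/
open scoped InnerProductSpace

variable {V : Type*} [NormedAddCommGroup V] [InnerProductSpace ℝ V]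

section

variable {Δ : Set V} {Pi : Finset V}

theorem IsRootSystem.neg_mem_s10 (hΔ : IsRootSystem Δ) {α : V} (hα : α ∈ Δ) : -α ∈ Δ := by
  have hαα : ⟪α, α⟫_ℝ ≠ 0 := inner_self_ne_zero.mpr fun h => hΔ.nonzero (h ▸ hα)
  have h := hΔ.reflect_mem α hα α hα
  rwa [mul_div_assoc, div_self hαα, mul_one, two_smul, sub_add_cancel_left] at h

/-- Equality in Cauchy–Schwarz would force `β = r • α` with `r < 0`, hence `β = -α` by
reducedness. -/
theorem IsRootSystem.inner_mul_inner_lt (hΔ : IsRootSystem Δ) {α β : V} (hα : α ∈ Δ)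
    (hβ : β ∈ Δ) (hin : ⟪α, β⟫_ℝ < 0) (hne : α + β ≠ 0) :
    ⟪α, β⟫_ℝ * ⟪α, β⟫_ℝ < ⟪α, α⟫_ℝ * ⟪β, β⟫_ℝ := by
  refine (real_inner_mul_inner_self_le α β).lt_of_ne fun heq => ?_
  have hnorm : ⟪α, β⟫_ℝ = -(‖α‖ * ‖β‖) := by
    rw [real_inner_self_eq_norm_mul_norm, real_inner_self_eq_norm_mul_norm] at heq
    nlinarith [norm_nonneg α, norm_nonneg β, mul_nonneg (norm_nonneg α) (norm_nonneg β)]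
  have hαβ : ‖α‖ * ‖β‖ ≠ 0 := fun h => by simp [h] at hnorm; linarith
  obtain ⟨-, r, hr, rfl⟩ := (real_inner_div_norm_mul_norm_eq_neg_one_iff α β).mp
    (by rw [hnorm, neg_div, div_self hαβ])
  rcases hΔ.reduced α hα r hβ with rfl | rfl
  · linarith
  · exact hne (by simp)

theorem IsRootSystem.add_mem_of_inner_neg_s10 (hΔ : IsRootSystem Δ) {α β : V} (hα : α ∈ Δ)
    (hβ : β ∈ Δ) (hin : ⟪α, β⟫_ℝ < 0) (hne : α + β ≠ 0) : α + β ∈ Δ := by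
  have hαα : 0 < ⟪α, α⟫_ℝ := real_inner_self_pos.mpr fun h => hΔ.nonzero (h ▸ hα)
  have hββ : 0 < ⟪β, β⟫_ℝ := real_inner_self_pos.mpr fun h => hΔ.nonzero (h ▸ hβ)
  obtain ⟨n, hn⟩ := hΔ.crystallographic α hα β hβ
  obtain ⟨m, hm⟩ := hΔ.crystallographic β hβ α hα
  have hn0 : n < 0 := by
    have : (n : ℝ) < 0 := hn ▸ div_neg_of_neg_of_pos (by linarith [real_inner_comm α β]) hαα
    exact_mod_cast this
  have hm0 : m < 0 := by
    have : (m : ℝ) < 0 := hm ▸ div_neg_of_neg_of_pos (by linarith) hββ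
    exact_mod_cast this
  -- the product of the two Cartan integers is `4 cos² < 4`, so one of them is `-1`
  have hnm : n * m < 4 := by
    have : (n * m : ℝ) = 4 * (⟪α, β⟫_ℝ * ⟪α, β⟫_ℝ) / (⟪α, α⟫_ℝ * ⟪β, β⟫_ℝ) := by
      rw [← hn, ← hm, real_inner_comm β α]; field_simp; ring
    have : (n * m : ℝ) < 4 := by
      rw [this, div_lt_iff₀ (by positivity)]
      linarith [hΔ.inner_mul_inner_lt hα hβ hin hne]
    exact_mod_cast this
  have : n = -1 ∨ m = -1 := by
    by_contra! h
    nlinarith [show n ≤ -2 by omega, show m ≤ -2 by omega]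
  rcases this with rfl | rfl
  · have h := hΔ.reflect_mem α hα β hβ
    rwa [hn, Int.cast_neg, Int.cast_one, neg_one_smul, sub_neg_eq_add, add_comm] at h
  · have h := hΔ.reflect_mem β hβ α hα
    rwa [hm, Int.cast_neg, Int.cast_one, neg_one_smul, sub_neg_eq_add] at h

theorem IsPos.add {α β : V} (hα : IsPos Δ Pi α) (hβ : IsPos Δ Pi β) (hαβ : α + β ∈ Δ) :
    IsPos Δ Pi (α + β) := by
  obtain ⟨-, c, rfl⟩ := hα
  obtain ⟨-, d, rfl⟩ := hβ
  refine ⟨hαβ, c + d, ?_⟩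
  simp only [_root_.Pi.add_apply, Nat.cast_add, add_smul, Finset.sum_add_distrib]

theorem IsBase.coeff_eq_zero_of_sum_eq_zero (hB : IsBase Δ Pi) {e : V → ℝ}
    (h : ∑ γ ∈ Pi, e γ • γ = 0) {γ : V} (hγ : γ ∈ Pi) : e γ = 0 :=
  Fintype.linearIndependent_iff.mp hB.indep (fun γ => e γ)
    (by rwa [Finset.sum_coe_sort Pi fun γ => e γ • γ]) ⟨γ, hγ⟩

theorem IsBase.not_isPos_neg (hΔ : IsRootSystem Δ) (hB : IsBase Δ Pi) {α : V}
    (hα : IsPos Δ Pi α) : ¬ IsPos Δ Pi (-α) := by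
  rintro ⟨-, d, hd⟩
  obtain ⟨hαΔ, c, hc⟩ := hα
  have hsum : ∑ γ ∈ Pi, ((c γ : ℝ) + d γ) • γ = 0 := by
    simp only [add_smul, Finset.sum_add_distrib, ← hc, ← hd, add_neg_cancel]
  have hc0 : ∀ γ ∈ Pi, (c γ : ℝ) = 0 := fun γ hγ => by
    have := hB.coeff_eq_zero_of_sum_eq_zero hsum hγ
    linarith [(d γ).cast_nonneg (α := ℝ), (c γ).cast_nonneg (α := ℝ)]
  refine hΔ.nonzero ?_
  rwa [hc, Finset.sum_eq_zero fun γ hγ => by rw [hc0 γ hγ, zero_smul]] at hαΔ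

theorem IsBase.isPos_or_isPos_neg (hΔ : IsRootSystem Δ) (hB : IsBase Δ Pi) {α : V}
    (hα : α ∈ Δ) : IsPos Δ Pi α ∨ IsPos Δ Pi (-α) := by
  rcases hB.decomp α hα with ⟨c, hc⟩ | ⟨c, hc⟩
  · exact .inl ⟨hα, c, hc⟩
  · exact .inr ⟨hΔ.neg_mem_s10 hα, c, by rw [hc, neg_neg]⟩

/-- In an irreducible root system the positive roots are connected under non-orthogonality:
otherwise the roots `±α` with `α` in a component and the remaining roots would split `Δ`
into two mutually orthogonal parts. -/
theorem IsIrred.eq_setOf_isPos (hΔ : IsRootSystem Δ) (hB : IsBase Δ Pi) (hirr : IsIrred Δ)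
    {S : Set V} (hS : S ⊆ {α | IsPos Δ Pi α}) (hne : S.Nonempty)
    (hclosed : ∀ u ∈ S, ∀ v, IsPos Δ Pi v → ⟪u, v⟫_ℝ ≠ 0 → v ∈ S) :
    S = {α | IsPos Δ Pi α} := by
  set Δ₁ := {w ∈ Δ | w ∈ S ∨ -w ∈ S}
  set Δ₂ := {w ∈ Δ | ¬ (w ∈ S ∨ -w ∈ S)}
  have hunion : Δ = Δ₁ ∪ Δ₂ := by
    ext w
    simp only [Set.mem_union, Set.mem_sep_iff, Δ₁, Δ₂]
    tauto
  have hreach : ∀ u ∈ S, ∀ v ∈ Δ, ⟪u, v⟫_ℝ ≠ 0 → v ∈ S ∨ -v ∈ S := fun u hu v hv huv =>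
    (hB.isPos_or_isPos_neg hΔ hv).imp (hclosed u hu v · huv)
      (hclosed u hu (-v) · (by rwa [inner_neg_right, neg_ne_zero]))
  have horth : ∀ y ∈ Δ₁, ∀ z ∈ Δ₂, ⟪y, z⟫_ℝ = 0 := by
    rintro y ⟨-, hy | hy⟩ z ⟨hzΔ, hz⟩ <;> by_contra hyz <;> refine hz ?_
    · exact hreach y hy z hzΔ hyz
    · exact hreach (-y) hy z hzΔ (by rwa [inner_neg_left, neg_ne_zero])
  obtain ⟨a, ha⟩ := hne
  rcases hirr Δ₁ Δ₂ hunion horth with h | h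
  · have : a ∈ Δ₁ := ⟨(hS ha).1, .inl ha⟩
    simp [h] at this
  refine Set.Subset.antisymm hS fun x hx => ?_
  have hx₁ : x ∈ Δ₁ := by
    by_contra hx₁
    have : x ∈ Δ₂ := ⟨hx.1, fun hx' => hx₁ ⟨hx.1, hx'⟩⟩
    simp [h] at this
  rcases hx₁.2 with hxS | hxS
  exacts [hxS, absurd (hS hxS) (hB.not_isPos_neg hΔ hx)]

theorem mem_of_inner_ne_zero_of_saturated (hΔ : IsRootSystem Δ) (hB : IsBase Δ Pi)
    {P : Set V} (hP : P ⊆ {α | IsPos Δ Pi α})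
    (hadd : ∀ α β : V, IsPos Δ Pi α → IsPos Δ Pi β → IsPos Δ Pi (α + β) → α ∈ P → α + β ∈ P)
    (hsplit : ∀ α β : V, IsPos Δ Pi α → IsPos Δ Pi β → α + β ∈ P → α ∈ P ∧ β ∈ P)
    {u v : V} (huP : u ∈ P) (hv : IsPos Δ Pi v) (huv : ⟪u, v⟫_ℝ ≠ 0) : v ∈ P := by
  have hu : IsPos Δ Pi u := hP huP
  rcases huv.lt_or_gt with hneg | hpos
  · have hsum : u + v ∈ Δ := hΔ.add_mem_of_inner_neg_s10 hu.1 hv.1 hneg fun h =>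
      hB.not_isPos_neg hΔ hu (eq_neg_of_add_eq_zero_right h ▸ hv)
    exact (hsplit u v hu hv (hadd u v hu hv (hu.add hv hsum) huP)).2
  obtain rfl | hne := eq_or_ne u v
  · exact huP
  have hdiff : u - v ∈ Δ := by
    rw [sub_eq_add_neg]
    refine hΔ.add_mem_of_inner_neg_s10 hu.1 (hΔ.neg_mem_s10 hv.1) ?_ ?_
    · rwa [inner_neg_right, neg_lt_zero]
    · rwa [← sub_eq_add_neg, sub_ne_zero]
  rcases hB.isPos_or_isPos_neg hΔ hdiff with hd | hd
  · exact (hsplit v (u - v) hv hd (by rwa [add_sub_cancel])).1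
  · rw [neg_sub] at hd
    simpa using hadd u (v - u) hu hd (by simpa using hv) huP

end

/-- In the (irreducible) root system of a complex simple Lie algebra, a nonempty set
`P` of positive roots closed under adding positive roots (in either argument) and under
splitting sums must be all of `Δ₊`. -/
theorem saturated_set_eq_pos {V : Type*} [NormedAddCommGroup V]
    [InnerProductSpace ℝ V] (Δ : Set V) (Pi : Finset V)
    (hΔ : IsRootSystem Δ) (hB : IsBase Δ Pi) (hirr : IsIrred Δ)
    (P : Set V) (hP : P ⊆ {α | IsPos Δ Pi α}) (hne : P.Nonempty)
    (h1 : ∀ α β : V, IsPos Δ Pi α → IsPos Δ Pi β → IsPos Δ Pi (α + β) →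
      (α ∈ P ∨ β ∈ P) → α + β ∈ P)
    (h2 : ∀ α β : V, IsPos Δ Pi α → IsPos Δ Pi β → α + β ∈ P → α ∈ P ∧ β ∈ P) :
    P = {α | IsPos Δ Pi α} :=
  hirr.eq_setOf_isPos hΔ hB hP hne fun _ hu _ hv huv =>
    mem_of_inner_ne_zero_of_saturated hΔ hB hP
      (fun α β hα hβ hαβ hαP => h1 α β hα hβ hαβ (.inl hαP)) h2 hu hv huv
end
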